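/- arXiv:2109.12705 — 5 statements merged into one kernel-verified Lean document; each statement's English description precedes it below -/
import Mathlib

section
/- For every integer n ≥ 2, the sum over k from 1 to ⌊n/2⌋ of (2k-1)! · S(n,2k) equals B(n-1), where S denotes the Stirling numbers of the second kind and B the ordered Bell (Fubini) numbers. -/
open Finset

/-- Stirling numbers of the second kind. -/
def S : ℕ → ℕ → ℕ
  | 0, 0 => 1
  | 0, _ + 1 => 0
  | _ + 1, 0 => 0
  | n + 1, k + 1 => (k + 1) * S n (k + 1) + S n k

/-- Ordered Bell (Fubini) numbers. -/
def B (n : ℕ) : ℕ := ∑ k ∈ range (n + 1), k.factorial * S n k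

lemma S_eq_zero : ∀ (m j : ℕ), m < j → S m j = 0 := by
  intro m
  induction m with
  | zero => intro j h; cases j with
    | zero => omega
    | succ j => rfl
  | succ m ih =>
    intro j h
    cases j with
    | zero => omega
    | succ j =>
      show (j + 1) * S m (j + 1) + S m j = 0
      rw [ih (j+1) (by omega), ih j (by omega)]
      simp

lemma sum_split (a : ℕ → ℕ) (K : ℕ) :
    ∑ k ∈ Icc 1 K, (a (2*k) + a (2*k-1)) = ∑ j ∈ Icc 1 (2*K), a j := by
  induction K with
  | zero => simp
  | succ K ih =>
    rw [show 2*(K+1) = 2*K+1+1 by ring]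
    rw [Finset.sum_Icc_succ_top (by omega : 1 ≤ K+1),
        Finset.sum_Icc_succ_top (by omega : 1 ≤ 2*K+1+1),
        Finset.sum_Icc_succ_top (by omega : 1 ≤ 2*K+1), ih]
    rw [show 2*(K+1)-1 = 2*K+1 by omega, show 2*(K+1) = 2*K+1+1 by ring]
    ring

theorem stmt0 (n : ℕ) (hn : 2 ≤ n) :
    ∑ k ∈ Icc 1 (n / 2), (2 * k - 1).factorial * S n (2 * k) = B (n - 1) := by
  obtain ⟨m, rfl⟩ : ∃ m, n = m + 1 := ⟨n - 1, by omega⟩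
  have hm : 1 ≤ m := by omega
  have step : ∀ k ∈ Icc 1 ((m+1) / 2),
      (2*k - 1).factorial * S (m+1) (2*k)
        = (2*k).factorial * S m (2*k) + (2*k-1).factorial * S m (2*k-1) := by
    intro k hk
    have hk1 : 1 ≤ k := (Finset.mem_Icc.mp hk).1
    have h2k : 2*k = (2*k-1) + 1 := by omega
    rw [h2k]
    show (2*k-1).factorial * ((2*k-1+1) * S m (2*k-1+1) + S m (2*k-1)) = _
    rw [Nat.factorial_succ, Nat.add_sub_cancel]
    ring
  rw [Finset.sum_congr rfl step, sum_split (fun j => j.factorial * S m j)]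
  simp only [Nat.add_sub_cancel]
  -- now show ∑ j ∈ Icc 1 (2*((m+1)/2)), j! * S m j = B m
  have hK1 : 2 * ((m+1)/2) ≤ m + 1 := by omega
  have hK2 : m ≤ 2 * ((m+1)/2) := by omega
  rw [B]
  rw [show range (m+1) = Icc 0 m from by rw [← Nat.Ico_zero_eq_range, Finset.Ico_add_one_right_eq_Icc]]
  have hz : ∀ j, j = 0 ∨ m < j → j.factorial * S m j = 0 := by
    intro j hj
    rcases hj with rfl | h
    · cases m with
      | zero => omega
      | succ t => show _ * S (t+1) 0 = 0; rfl
    · rw [S_eq_zero m j h, mul_zero]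
  have e1 : ∑ j ∈ Icc 1 (2*((m+1)/2)), j.factorial * S m j
      = ∑ j ∈ Icc 0 (m+1), j.factorial * S m j := by
    apply Finset.sum_subset
    · intro j hj; simp only [Finset.mem_Icc] at hj ⊢; omega
    · intro j hj hj'
      simp only [Finset.mem_Icc] at hj hj'
      exact hz j (by omega)
  have e2 : ∑ j ∈ Icc 0 m, j.factorial * S m j
      = ∑ j ∈ Icc 0 (m+1), j.factorial * S m j := by
    apply Finset.sum_subset
    · intro j hj; simp only [Finset.mem_Icc] at hj ⊢; omega
    · intro j hj hj'
      simp only [Finset.mem_Icc] at hj hj'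
      exact hz j (by omega)
  rw [e1, e2]
end

section
/- For every integer n ≥ 2, the sum over k from 0 to ⌊n/2⌋ of (2k)! · S(n,2k+1) equals B(n-1). -/
/-! The recurrence `S (n+1) (2k+1) = (2k+1) S n (2k+1) + S n (2k)`, weighted by `(2k)!`, turns the
`k`-th summand of the left-hand side for `n + 1` into `(2k)! S n (2k) + (2k+1)! S n (2k+1)`: two
consecutive terms of the sum defining `B n`. Summing over `k` recovers `B n`, the surplus terms
vanishing because `S n k = 0` for `k > n`. -/

open Finset

theorem Finset.sum_range_two_mul {M : Type*} [AddCommMonoid M] (f : ℕ → M) (n : ℕ) :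
    ∑ j ∈ range (2 * n), f j = ∑ k ∈ range n, (f (2 * k) + f (2 * k + 1)) := by
  induction n with
  | zero => simp
  | succ n ih => rw [sum_range_succ, ← ih, Nat.mul_succ, sum_range_succ, sum_range_succ, add_assoc]

theorem S_eq_zero_of_lt {n k : ℕ} (h : n < k) : S n k = 0 := by
  induction n generalizing k with
  | zero => obtain ⟨j, rfl⟩ := Nat.exists_eq_succ_of_ne_zero h.ne'; rfl
  | succ n ih =>
    obtain ⟨j, rfl⟩ := Nat.exists_eq_succ_of_ne_zero (Nat.ne_zero_of_lt h)
    simp only [S, ih (by omega : n < j + 1), ih (by omega : n < j), mul_zero]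

theorem B_eq_sum_range_of_le {n N : ℕ} (h : n + 1 ≤ N) :
    B n = ∑ k ∈ range N, k.factorial * S n k := by
  refine sum_subset (range_subset_range.2 h) fun k _ hk => ?_
  rw [S_eq_zero_of_lt (by simpa using hk), mul_zero]

theorem factorial_mul_S_succ_odd (n k : ℕ) :
    (2 * k).factorial * S (n + 1) (2 * k + 1) =
      (2 * k).factorial * S n (2 * k) + (2 * k + 1).factorial * S n (2 * k + 1) := by
  rw [S, Nat.factorial_succ]
  ring

theorem stmt1 (n : ℕ) (hn : 2 ≤ n) :
    ∑ k ∈ range (n / 2 + 1), (2 * k).factorial * S n (2 * k + 1) = B (n - 1) := by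
  obtain ⟨m, rfl⟩ : ∃ m, n = m + 1 := ⟨n - 1, by omega⟩
  rw [Nat.add_sub_cancel, B_eq_sum_range_of_le (N := 2 * ((m + 1) / 2 + 1)) (by omega),
    sum_range_two_mul]
  exact sum_congr rfl fun k _ => factorial_mul_S_succ_odd m k
end

section
/- For every integer n ≥ 2, the sum H(n) = Σ_{k=1}^{n} (k-1)!·S(n,k) equals 2·B(n-1), and H(1) = 1. -/
open Finset

theorem S_succ_zero (n : ℕ) : S (n + 1) 0 = 0 := rfl

theorem sum_Icc_factorial_pred_mul_S (m n : ℕ) :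
    ∑ k ∈ Icc 1 (n + 1), (k - 1).factorial * S m k =
      ∑ i ∈ range (n + 1), i.factorial * S m (i + 1) := by
  rw [← Ico_add_one_right_eq_Icc, sum_Ico_eq_sum_range]
  simp [add_comm 1]

theorem B_eq_sum_shift_add_S_zero (n : ℕ) :
    B n = ∑ i ∈ range (n + 1), (i + 1).factorial * S n (i + 1) + S n 0 := by
  rw [B, sum_range_succ', sum_range_succ, S_eq_zero_of_lt (Nat.lt_succ_self n)]
  simp

theorem sum_Icc_factorial_pred_mul_S_succ (n : ℕ) :
    ∑ k ∈ Icc 1 (n + 1), (k - 1).factorial * S (n + 1) k + S n 0 = 2 * B n := by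
  have recurrence : ∀ i, i.factorial * S (n + 1) (i + 1) =
      (i + 1).factorial * S n (i + 1) + i.factorial * S n i := fun i => by
    rw [S, Nat.factorial_succ]; ring
  rw [sum_Icc_factorial_pred_mul_S, sum_congr rfl fun i _ => recurrence i, sum_add_distrib,
    ← B.eq_1]
  linarith [B_eq_sum_shift_add_S_zero n]

theorem stmt2 :
    (∀ n : ℕ, 2 ≤ n → ∑ k ∈ Icc 1 n, (k - 1).factorial * S n k = 2 * B (n - 1)) ∧
    ∑ k ∈ Icc 1 1, (k - 1).factorial * S 1 k = 1 := by
  refine ⟨fun n hn => ?_, ?_⟩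
  · obtain ⟨m, rfl⟩ : ∃ m, n = m + 2 := ⟨n - 2, by omega⟩
    simpa [S_succ_zero] using sum_Icc_factorial_pred_mul_S_succ (m + 1)
  · decide
end

section
/- For every integer n ≥ 1, B(n) = (-1)^{n+1} + 2·Σ_{k=0}^{⌊n/2⌋} (2k)!·S(n,2k). -/
open Finset

/-!
`S` is Mathlib's `Nat.stirlingSecond`, and the alternating sum `∑ (-1)^k k! S(n,k)` equals
`(-1)^n`: this is `x^n = ∑ S(n,k) x(x-1)⋯(x-k+1)` at `x = -1`, and the recurrence for `S`
makes the sum telescope. Adding it to `B n = ∑ k! S(n,k)` cancels the odd terms and doubles the even ones.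
-/

open Nat

theorem S_eq_stirlingSecond : S = stirlingSecond := by
  funext n k
  induction n generalizing k with
  | zero => cases k <;> rfl
  | succ n ih => cases k <;> simp [S, stirlingSecond_succ_succ, ih]

theorem sum_neg_one_pow_mul_factorial_mul_stirlingSecond {R : Type*} [CommRing R] (n : ℕ) :
    ∑ k ∈ range (n + 1), (-1 : R) ^ k * (k ! * stirlingSecond n k) = (-1) ^ n := by
  induction n with
  | zero => simp
  | succ n ih =>
    set a : ℕ → R := fun k ↦ (-1) ^ k * (k ! * stirlingSecond n k)
    have hstep : ∀ k, (-1 : R) ^ (k + 1) * ((k + 1)! * stirlingSecond (n + 1) (k + 1)) =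
        (k + 1 : ℕ) * a (k + 1) - k * a k - a k := by
      intro k
      simp only [a, stirlingSecond_succ_succ, factorial_succ]
      push_cast
      ring
    rw [sum_range_succ', sum_congr rfl fun k _ ↦ hstep k, sum_sub_distrib,
      sum_range_sub (fun k ↦ (k : R) * a k), ih]
    simp [a, stirlingSecond_eq_zero_of_lt (lt_succ_self n), pow_succ]

theorem sum_range_filter_even {M : Type*} [AddCommMonoid M] (f : ℕ → M) (n : ℕ) :
    ∑ k ∈ range (n + 1) with Even k, f k = ∑ j ∈ range (n / 2 + 1), f (2 * j) := by
  symm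
  refine sum_nbij' (2 * ·) (· / 2) ?_ ?_ ?_ ?_ fun _ _ ↦ rfl <;> intro k <;>
    simp only [mem_filter, mem_range, Nat.even_iff] <;> omega

theorem sum_range_one_add_neg_one_pow_mul {R : Type*} [CommRing R] (f : ℕ → R) (n : ℕ) :
    ∑ k ∈ range (n + 1), (1 + (-1) ^ k) * f k = 2 * ∑ j ∈ range (n / 2 + 1), f (2 * j) := by
  rw [← sum_range_filter_even, sum_filter, mul_sum]
  refine sum_congr rfl fun k _ ↦ ?_
  rcases Nat.even_or_odd k with hk | hk
  · simp [hk, hk.neg_one_pow, one_add_one_eq_two]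
  · simp [Nat.not_even_iff_odd.mpr hk, hk.neg_one_pow]

theorem stmt3_general (n : ℕ) :
    (B n : ℤ) = (-1) ^ (n + 1) +
      2 * ∑ k ∈ range (n / 2 + 1), ((2 * k).factorial * S n (2 * k) : ℤ) := by
  rw [← sum_range_one_add_neg_one_pow_mul (fun k ↦ (k ! * S n k : ℤ)), B, S_eq_stirlingSecond]
  have h := sum_neg_one_pow_mul_factorial_mul_stirlingSecond (R := ℤ) n
  simp only [add_mul, one_mul, sum_add_distrib]
  push_cast
  linear_combination (-1 : ℤ) * h

theorem stmt3 (n : ℕ) (hn : 1 ≤ n) :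
    (B n : ℤ) = (-1) ^ (n + 1) +
      2 * ∑ k ∈ range (n / 2 + 1), ((2 * k).factorial * S n (2 * k) : ℤ) :=
  stmt3_general n
end

section
/- For every integer n ≥ 1, B(n) = Σ_{k=1}^{⌊(n+1)/2⌋} (2k-1)!·S(n+1,2k). -/
open Finset

/-! The recurrence `S(n+1, k+1) = (k+1) S(n, k+1) + S(n, k)`, multiplied by `k!`, says that
`k! S(n+1, k+1)` is the sum of two consecutive terms `j! S(n, j)` of `B n`. Grouping the terms of
`B n` in pairs `(2k-1, 2k)` therefore gives the odd-factorial sum; the term `j = 0` vanishes since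
`n ≥ 1`, and the terms with `n < j ≤ 2 ⌊(n+1)/2⌋` vanish since `S(n, j) = 0` there. -/

theorem Finset.sum_Icc_one_two_mul {M : Type*} [AddCommMonoid M] (f : ℕ → M) (m : ℕ) :
    ∑ j ∈ Icc 1 (2 * m), f j = ∑ k ∈ Icc 1 m, (f (2 * k - 1) + f (2 * k)) := by
  induction m with
  | zero => simp
  | succ m ih =>
    rw [show 2 * (m + 1) = 2 * m + 1 + 1 by ring, sum_Icc_succ_top (by omega),
      sum_Icc_succ_top (by omega), ih, sum_Icc_succ_top (by omega), add_assoc]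
    rfl

theorem S_succ_succ (n k : ℕ) : S (n + 1) (k + 1) = (k + 1) * S n (k + 1) + S n k := rfl

theorem factorial_mul_S_succ_succ (n k : ℕ) :
    k.factorial * S (n + 1) (k + 1) = (k + 1).factorial * S n (k + 1) + k.factorial * S n k := by
  rw [S_succ_succ, Nat.factorial_succ]
  ring

theorem B_succ_eq_sum_Icc (n : ℕ) :
    B (n + 1) = ∑ j ∈ Icc 1 (n + 1), j.factorial * S (n + 1) j := by
  rw [B, range_eq_Ico, sum_eq_sum_Ico_succ_bot (by omega), S_succ_zero, mul_zero, zero_add,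
    Ico_add_one_right_eq_Icc]

theorem B_eq_sum_Icc_of_le {n N : ℕ} (hn : 1 ≤ n) (hN : n ≤ N) :
    B n = ∑ j ∈ Icc 1 N, j.factorial * S n j := by
  obtain ⟨n, rfl⟩ := Nat.exists_eq_add_of_le' hn
  rw [B_succ_eq_sum_Icc]
  refine sum_subset (Icc_subset_Icc_right hN) fun j hj hjn => ?_
  simp only [mem_Icc] at hj hjn
  rw [S_eq_zero_of_lt (by omega), mul_zero]

theorem stmt5 (n : ℕ) (hn : 1 ≤ n) :
    B n = ∑ k ∈ Icc 1 ((n + 1) / 2), (2 * k - 1).factorial * S (n + 1) (2 * k) := by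
  rw [B_eq_sum_Icc_of_le hn (by omega : n ≤ 2 * ((n + 1) / 2)), sum_Icc_one_two_mul]
  refine sum_congr rfl fun k hk => ?_
  obtain ⟨j, hj⟩ : ∃ j, 2 * k = j + 1 := ⟨2 * k - 1, by grind⟩
  rw [hj, Nat.add_sub_cancel, factorial_mul_S_succ_succ, add_comm]
end
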